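/- Reduction of bounded counterexample search from QL to QL⁻: for every QoS formula Φ of QL, every QoS-extended communicating system S, and every bound n on the number of unfoldings of the iteration operator *, searching for counterexamples of Φ in S with at most n unfoldings of each * in the g-choreographies of Φ is equivalent to searching for counterexamples of the formula Φ̂ in QL⁻ obtained from Φ by replacing each occurrence of * by the finite disjunction of its at most n unfoldings; that is, Φ has a counterexample run in S with at most n unfoldings of * iff Φ̂ has a counterexample run in S. -/
import Mathlib


/-! ## Possibly infinite runs -/

/-- A (possibly infinite) run over transitions of type `T`:
either a finite list of transitions or an infinite stream of transitions. -/
inductive Run (T : Type) where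
  | fin : List T → Run T
  | inf : (ℕ → T) → Run T

namespace Run

/-- A run is finite when it is given by a list. -/
def Finite {T : Type} : Run T → Prop
  | .fin _ => True
  | .inf _ => False

/-- Map a function over the elements of a run (e.g. to extract the
language/word of a run from its transitions). -/
def map {T M : Type} (h : T → M) : Run T → Run M
  | .fin l => .fin (l.map h)
  | .inf f => .inf (h ∘ f)

/-- Append a finite run in front of a possibly infinite run. -/
def app {T : Type} (l : List T) : Run T → Run T
  | .fin l' => .fin (l ++ l')
  | .inf f => .inf (fun n => if h : n < l.length then l.get ⟨n, h⟩ else f (n - l.length))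

/-- Append of possibly infinite runs (an infinite run absorbs whatever follows). -/
def appR {T : Type} : Run T → Run T → Run T
  | .fin l, r => app l r
  | .inf f, _ => .inf f

/-- Prefix order on possibly infinite runs. -/
def IsPrefix {T : Type} : Run T → Run T → Prop
  | .fin l, .fin l' => l <+: l'
  | .fin l, .inf f => ∀ i : Fin l.length, l.get i = f i
  | .inf _, .fin _ => False
  | .inf f, .inf g => f = g

end Run

/-! ## g-choreographies -/

/-- g-choreographies, with the iteration operator `star`. -/
inductive GChor (M : Type) where
  | empty
  | act (m : M)
  | seq (g₁ g₂ : GChor M)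
  | alt (g₁ g₂ : GChor M)
  | star (g : GChor M)

namespace GChor

/-- A g-choreography is `*`-free when it contains no occurrence of the
iteration operator `star`. -/
def StarFree {M : Type} : GChor M → Prop
  | .empty => True
  | .act _ => True
  | .seq g₁ g₂ => StarFree g₁ ∧ StarFree g₂
  | .alt g₁ g₂ => StarFree g₁ ∧ StarFree g₂
  | .star _ => False

/-- The finite words of the language `L[G]` of a g-choreography. -/
def lang {M : Type} : GChor M → Set (List M)
  | .empty => {[]}
  | .act m => {[m]}
  | .seq g₁ g₂ => {l | ∃ l₁ l₂, l₁ ∈ lang g₁ ∧ l₂ ∈ lang g₂ ∧ l = l₁ ++ l₂}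
  | .alt g₁ g₂ => lang g₁ ∪ lang g₂
  | .star g => {l | ∃ ws : List (List M), (∀ w ∈ ws, w ∈ lang g) ∧ l = ws.flatten}

/-- The infinite words of the language `L[G]` of a g-choreography
(arising from infinite unfoldings of `star` or from divergent components). -/
def langInf {M : Type} : GChor M → Set (ℕ → M)
  | .empty => ∅
  | .act _ => ∅
  | .seq g₁ g₂ => langInf g₁ ∪
      {f | ∃ l h, l ∈ lang g₁ ∧ h ∈ langInf g₂ ∧ Run.inf f = Run.app l (Run.inf h)}
  | .alt g₁ g₂ => langInf g₁ ∪ langInf g₂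
  | .star g =>
      {f | ∃ l h, l ∈ lang (GChor.star g) ∧ h ∈ langInf g ∧ Run.inf f = Run.app l (Run.inf h)} ∪
      {f | ∃ w : ℕ → List M, (∀ n, w n ∈ lang g ∧ w n ≠ []) ∧
            ∀ n, Run.IsPrefix (Run.fin (((List.range n).map w).flatten)) (Run.inf f)}

/-- `L[G]` as a set of possibly infinite words. -/
def langR {M : Type} (g : GChor M) : Set (Run M) :=
  {r | ∃ l ∈ lang g, r = .fin l} ∪ {r | ∃ f ∈ langInf g, r = .inf f}

/-- `n`-fold sequential repetition of a g-choreography. -/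
def pow {M : Type} : ℕ → GChor M → GChor M
  | 0, _ => .empty
  | n + 1, g => .seq g (pow n g)

/-- The alternative of all repetitions of `g` up to `n` times. -/
def iterUpTo {M : Type} : ℕ → GChor M → GChor M
  | 0, _ => .empty
  | n + 1, g => .alt (pow (n + 1) g) (iterUpTo n g)

/-- Replace every occurrence of `star` by (the alternative of) at most `n` unfoldings. -/
def unfold {M : Type} (n : ℕ) : GChor M → GChor M
  | .empty => .empty
  | .act m => .act m
  | .seq g₁ g₂ => .seq (unfold n g₁) (unfold n g₂)
  | .alt g₁ g₂ => .alt (unfold n g₁) (unfold n g₂)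
  | .star g => iterUpTo n (unfold n g)

/-- The `n`-bounded language of a g-choreography: each `star` is unfolded at most
`n` times, so all words are finite. -/
def langBnd {M : Type} (n : ℕ) : GChor M → Set (List M)
  | .empty => {[]}
  | .act m => {[m]}
  | .seq g₁ g₂ => {l | ∃ l₁ l₂, l₁ ∈ langBnd n g₁ ∧ l₂ ∈ langBnd n g₂ ∧ l = l₁ ++ l₂}
  | .alt g₁ g₂ => langBnd n g₁ ∪ langBnd n g₂
  | .star g => {l | ∃ ws : List (List M), ws.length ≤ n ∧ (∀ w ∈ ws, w ∈ langBnd n g) ∧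
      l = ws.flatten}

end GChor

/-! ## QL formulas -/

/-- QoS logic formulas: Φ ::= ⊤ | ψ | ¬Φ | Φ ∨ Φ | Φ U_G Φ, where `ψ` ranges over
atomic RCF constraints of type `A` and `G` over g-choreographies on messages `M`. -/
inductive QL (A M : Type) where
  | top
  | atom (ψ : A)
  | neg (Φ : QL A M)
  | or (Φ₁ Φ₂ : QL A M)
  | untl (Φ₁ : QL A M) (g : GChor M) (Φ₂ : QL A M)

namespace QL

/-- `QL⁻`: formulas in which every g-choreography indexing an until is `*`-free. -/
def StarFree {A M : Type} : QL A M → Prop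
  | .top => True
  | .atom _ => True
  | .neg Φ => StarFree Φ
  | .or Φ₁ Φ₂ => StarFree Φ₁ ∧ StarFree Φ₂
  | .untl Φ₁ g Φ₂ => StarFree Φ₁ ∧ g.StarFree ∧ StarFree Φ₂

/-- Replace every `star` in the g-choreographies of a formula by at most `n` unfoldings. -/
def unfold {A M : Type} (n : ℕ) : QL A M → QL A M
  | .top => .top
  | .atom ψ => .atom ψ
  | .neg Φ => .neg (unfold n Φ)
  | .or Φ₁ Φ₂ => .or (unfold n Φ₁) (unfold n Φ₂)
  | .untl Φ₁ g Φ₂ => .untl (unfold n Φ₁) (g.unfold n) (unfold n Φ₂)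

end QL

/-! ## QoS-extended communicating systems and QL semantics -/

/-- A QoS-extended communicating system, abstracted: `T` is the type of transitions,
`A` the type of atomic RCF constraints, `M` the type of interactions labelling
g-choreographies. -/
structure QSystem (T A M : Type) where
  /-- `Δ_S`: the set of finite runs of the system. -/
  Runs : Set (List T)
  /-- `Δ_S^∞`: the set of possibly infinite runs of the system. -/
  RunsInf : Set (Run T)
  /-- The label of a transition; the language `L[π]` of a run is the word of its labels. -/
  lbl : T → M
  /-- The last configuration of a finite run is final. -/
  final : List T → Prop
  /-- `agg_S(π') ⊢_RCF ψ`: the aggregated QoS values of a run entail an atomic constraint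
  in the theory of real closed fields. -/
  entails : Run T → A → Prop
  /-- `L[ρ] ∈ hat-L[G]`: membership of the language of a run in the prefix closure of
  `L[G]` restricted to complete words. -/
  langHat : List T → GChor M → Prop
  /-- `ρ ∈ prf(π)` "up to a final configuration". -/
  prfFinal : Run T → Run T → Prop

/-- The satisfaction relation `⟨π, π'⟩ ⊨_S Φ` of QL. -/
def Sat {T A M : Type} (S : QSystem T A M) : Run T → Run T → QL A M → Prop
  | _, _, .top => True
  | _, π', .atom ψ => S.entails π' ψ
  | π, π', .neg Φ => ¬ Sat S π π' Φ
  | π, π', .or Φ₁ Φ₂ => Sat S π π' Φ₁ ∨ Sat S π π' Φ₂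
  | π, π', .untl Φ₁ g Φ₂ =>
      ∃ π'' : Run T, (π''.map S.lbl) ∈ GChor.langR g ∧
        S.prfFinal (π'.appR π'') π ∧
        Sat S π (π'.appR π'') Φ₂ ∧
        ∀ π''' : Run T, π'''.IsPrefix π'' → π''' ≠ π'' → Sat S π (π'.appR π''') Φ₁

/-- `Φ` admits finite models along `π`: whenever `⟨π, ρ⟩ ⊨_S Φ` for a finite prefix `ρ`
of `π`, there is a finite prefix `π⁻ ∈ Δ_S` of `π` with `⟨π⁻, ρ⟩ ⊨_S Φ`. -/
def FinModels {T A M : Type} (S : QSystem T A M) (π : Run T) (Φ : QL A M) : Prop :=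
  ∀ ρ : List T, (Run.fin ρ).IsPrefix π → Sat S π (.fin ρ) Φ →
    ∃ πm : List T, πm ∈ S.Runs ∧ (Run.fin πm).IsPrefix π ∧ Sat S (.fin πm) (.fin ρ) Φ

/-- The `n`-bounded satisfaction relation: like `Sat`, but each `star` in the
g-choreographies indexing until operators is unfolded at most `n` times. -/
def SatBnd {T A M : Type} (S : QSystem T A M) (n : ℕ) : Run T → List T → QL A M → Prop
  | _, _, .top => True
  | _, π', .atom ψ => S.entails (.fin π') ψ
  | π, π', .neg Φ => ¬ SatBnd S n π π' Φ
  | π, π', .or Φ₁ Φ₂ => SatBnd S n π π' Φ₁ ∨ SatBnd S n π π' Φ₂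
  | π, π', .untl Φ₁ g Φ₂ =>
      ∃ π'' : List T, (π''.map S.lbl) ∈ g.langBnd n ∧
        S.prfFinal (.fin (π' ++ π'')) π ∧
        SatBnd S n π (π' ++ π'') Φ₂ ∧
        ∀ π''' : List T, π''' <+: π'' → π''' ≠ π'' → SatBnd S n π (π' ++ π''') Φ₁

/-! ## The algorithms `qSat`, `qModels`, `qUntil` -/

/-- A QoS-extended communicating system together with the decision procedures
needed to run the algorithms (the RCF decision procedure, decidability of the
language checks, finality checks, and an enumeration of `Δ_S^i`). -/
structure DecSystem (T A M : Type) extends QSystem T A M where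
  decFinal : ∀ ρ : List T, Decidable (final ρ)
  decEntails : ∀ (ρ : List T) (ψ : A), Decidable (entails (.fin ρ) ψ)
  decLangHat : ∀ (ρ : List T) (g : GChor M), Decidable (langHat ρ g)
  /-- Decides whether the language of a run is a prefix of a word of `L[G]`. -/
  decCand : ∀ (ρ : List T) (g : GChor M),
      Decidable (∃ w ∈ GChor.langR g, (Run.fin (ρ.map lbl)).IsPrefix w)
  /-- An enumeration of `Δ_S^i`, the runs of the system of length `i`. -/
  runsOfLen : ℕ → List (List T)
  runsOfLen_spec : ∀ (i : ℕ) (ρ : List T), ρ ∈ runsOfLen i ↔ ρ ∈ Runs ∧ ρ.length = i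

/-- The loop of the `qUntil` algorithm: `c1`/`c2` check `Φ₁`/`Φ₂` (via `qModels`),
`hat` checks membership of the language of a run in `hat-L[G]`, `cand` checks whether
the language of a run is a prefix of a word of `L[G]`; the fuel counts the remaining
transitions of `π` (so fuel `0` corresponds to `π'π'' = π`). -/
def qUntilAux {T : Type} (c1 c2 hat cand : List T → Bool) (π π' : List T) :
    ℕ → List T → Bool
  | fuel, π'' =>
    if hat π'' && c2 (π' ++ π'') then true
    else if !c1 (π' ++ π'') then false
    else
      match fuel with
      | 0 => false
      | fuel + 1 =>
        match π[(π' ++ π'').length]? with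
        | none => false
        | some α =>
          if cand (π'' ++ [α]) then qUntilAux c1 c2 hat cand π π' fuel (π'' ++ [α])
          else false

/-- The algorithm `qModels(Φ, S, π, π')`. -/
def qModels {T A M : Type} (S : DecSystem T A M) : QL A M → List T → List T → Bool
  | .top, _, _ => true
  | .atom ψ, _, π' => @decide _ (S.decEntails π' ψ)
  | .neg Φ, π, π' => !qModels S Φ π π'
  | .or Φ₁ Φ₂, π, π' => qModels S Φ₁ π π' || qModels S Φ₂ π π'
  | .untl Φ₁ g Φ₂, π, π' =>
      qUntilAux (qModels S Φ₁ π) (qModels S Φ₂ π)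
        (fun ρ => @decide _ (S.decLangHat ρ g))
        (fun ρ => @decide _ (S.decCand ρ g))
        π π' (π.length - (π' ++ ([] : List T)).length) []

/-- The algorithm `qUntil(Φ₁, G, Φ₂, S, π, π', π'')`. -/
def qUntil {T A M : Type} (S : DecSystem T A M) (Φ₁ : QL A M) (g : GChor M) (Φ₂ : QL A M)
    (π π' π'' : List T) : Bool :=
  qUntilAux (qModels S Φ₁ π) (qModels S Φ₂ π)
    (fun ρ => @decide _ (S.decLangHat ρ g))
    (fun ρ => @decide _ (S.decCand ρ g))
    π π' (π.length - (π' ++ π'').length) π''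

/-- The algorithm `qSat(Φ, S, k)`: enumerate all runs of `S` of length `i ≤ k` and
return true iff one of them ends in a final configuration and models `Φ` from `ε`. -/
def qSat {T A M : Type} (S : DecSystem T A M) (Φ : QL A M) (k : ℕ) : Bool :=
  (List.range (k + 1)).any fun i =>
    (S.runsOfLen i).any fun π =>
      (@decide _ (S.decFinal π)) && qModels S Φ π []

/-! ## Fuelled versions of `qModels` and `qUntil` (for the termination statement) -/

mutual
/-- A step-indexed version of `qModels`: returns `none` when the fuel is exhausted
before a base case is reached. -/
def qModelsFuel {T A M : Type} (S : DecSystem T A M) :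
    ℕ → QL A M → List T → List T → Option Bool
  | 0, _, _, _ => none
  | _ + 1, .top, _, _ => some true
  | _ + 1, .atom ψ, _, π' => some (@decide _ (S.decEntails π' ψ))
  | n + 1, .neg Φ, π, π' => (qModelsFuel S n Φ π π').map (! ·)
  | n + 1, .or Φ₁ Φ₂, π, π' =>
      match qModelsFuel S n Φ₁ π π', qModelsFuel S n Φ₂ π π' with
      | some b₁, some b₂ => some (b₁ || b₂)
      | _, _ => none
  | n + 1, .untl Φ₁ g Φ₂, π, π' => qUntilFuel S n Φ₁ g Φ₂ π π' []

/-- A step-indexed version of `qUntil`: returns `none` when the fuel is exhausted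
before a base case is reached. -/
def qUntilFuel {T A M : Type} (S : DecSystem T A M) :
    ℕ → QL A M → GChor M → QL A M → List T → List T → List T → Option Bool
  | 0, _, _, _, _, _, _ => none
  | n + 1, Φ₁, g, Φ₂, π, π', π'' =>
      match qModelsFuel S n Φ₂ π (π' ++ π''), qModelsFuel S n Φ₁ π (π' ++ π'') with
      | some b₂, some b₁ =>
          if (@decide _ (S.decLangHat π'' g)) && b₂ then some true
          else if !b₁ then some false
          else
            match π[(π' ++ π'').length]? with
            | none => some false
            | some α =>
                if @decide _ (S.decCand (π'' ++ [α]) g) then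
                  qUntilFuel S n Φ₁ g Φ₂ π π' (π'' ++ [α])
                else some false
      | _, _ => none
end

/-! ## Auxiliary lemmas -/

open GChor

lemma gchor_starFree_iterUpTo {M : Type} (n : ℕ) (g : GChor M) (hg : g.StarFree) :
    (iterUpTo n g).StarFree := by
  induction n with
  | zero => trivial
  | succ k ih =>
    refine ⟨?_, ih⟩
    clear ih
    induction k with
    | zero => exact ⟨hg, trivial⟩
    | succ m ihm => exact ⟨hg, ihm⟩

lemma gchor_starFree_unfold {M : Type} (n : ℕ) (g : GChor M) :
    (g.unfold n).StarFree := by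
  induction g with
  | empty => trivial
  | act m => trivial
  | seq g₁ g₂ ih₁ ih₂ => exact ⟨ih₁, ih₂⟩
  | alt g₁ g₂ ih₁ ih₂ => exact ⟨ih₁, ih₂⟩
  | star g ih => exact gchor_starFree_iterUpTo n _ ih

lemma ql_starFree_unfold {A M : Type} (n : ℕ) (Φ : QL A M) :
    (Φ.unfold n).StarFree := by
  induction Φ with
  | top => trivial
  | atom ψ => trivial
  | neg Φ ih => exact ih
  | or Φ₁ Φ₂ ih₁ ih₂ => exact ⟨ih₁, ih₂⟩
  | untl Φ₁ g Φ₂ ih₁ ih₂ => exact ⟨ih₁, gchor_starFree_unfold n g, ih₂⟩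

lemma langInf_starFree {M : Type} (g : GChor M) (hg : g.StarFree) :
    g.langInf = ∅ := by
  induction g with
  | empty => rfl
  | act m => rfl
  | seq g₁ g₂ ih₁ ih₂ =>
    obtain ⟨h₁, h₂⟩ := hg
    ext f
    simp [langInf, ih₁ h₁, ih₂ h₂]
  | alt g₁ g₂ ih₁ ih₂ =>
    obtain ⟨h₁, h₂⟩ := hg
    simp [langInf, ih₁ h₁, ih₂ h₂]
  | star g ih => exact absurd hg not_false

lemma mem_lang_pow {M : Type} (k : ℕ) (g : GChor M) (l : List M) :
    l ∈ lang (pow k g) ↔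
      ∃ ws : List (List M), ws.length = k ∧ (∀ w ∈ ws, w ∈ lang g) ∧ l = ws.flatten := by
  induction k generalizing l with
  | zero =>
    simp only [pow, lang, Set.mem_singleton_iff]
    constructor
    · rintro rfl; exact ⟨[], rfl, by simp, rfl⟩
    · rintro ⟨ws, hlen, _, rfl⟩
      rw [List.length_eq_zero_iff] at hlen; subst hlen; rfl
  | succ k ih =>
    simp only [pow, lang, Set.mem_setOf_eq]
    constructor
    · rintro ⟨l₁, l₂, h₁, h₂, rfl⟩
      obtain ⟨ws, hlen, hmem, rfl⟩ := ih l₂ |>.mp h₂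
      refine ⟨l₁ :: ws, by simp [hlen], ?_, by simp⟩
      intro w hw
      rcases List.mem_cons.mp hw with h | h
      · exact h ▸ h₁
      · exact hmem w h
    · rintro ⟨ws, hlen, hmem, rfl⟩
      cases ws with
      | nil => simp at hlen
      | cons w ws =>
        refine ⟨w, ws.flatten, hmem w (by simp), ?_, by simp⟩
        exact (ih _).mpr ⟨ws, by simpa using hlen, fun x hx => hmem x (by simp [hx]), rfl⟩

lemma mem_lang_iterUpTo {M : Type} (n : ℕ) (g : GChor M) (l : List M) :
    l ∈ lang (iterUpTo n g) ↔
      ∃ ws : List (List M), ws.length ≤ n ∧ (∀ w ∈ ws, w ∈ lang g) ∧ l = ws.flatten := by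
  induction n generalizing l with
  | zero =>
    simp only [iterUpTo, lang, Set.mem_singleton_iff]
    constructor
    · rintro rfl; exact ⟨[], by simp, by simp, rfl⟩
    · rintro ⟨ws, hlen, _, rfl⟩
      rw [Nat.le_zero, List.length_eq_zero_iff] at hlen; subst hlen; rfl
  | succ k ih =>
    have hsplit : l ∈ lang (iterUpTo (k+1) g) ↔
        l ∈ lang (pow (k+1) g) ∨ l ∈ lang (iterUpTo k g) := Iff.rfl
    rw [hsplit, mem_lang_pow, ih]
    constructor
    · rintro (⟨ws, hlen, hmem, rfl⟩ | ⟨ws, hlen, hmem, rfl⟩)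
      · exact ⟨ws, hlen.le, hmem, rfl⟩
      · exact ⟨ws, hlen.trans (Nat.le_succ k), hmem, rfl⟩
    · rintro ⟨ws, hlen, hmem, rfl⟩
      rcases Nat.lt_or_ge ws.length (k + 1) with h | h
      · exact Or.inr ⟨ws, Nat.lt_succ_iff.mp h, hmem, rfl⟩
      · exact Or.inl ⟨ws, le_antisymm hlen h, hmem, rfl⟩

lemma lang_unfold {M : Type} (n : ℕ) (g : GChor M) :
    lang (g.unfold n) = langBnd n g := by
  induction g with
  | empty => rfl
  | act m => rfl
  | seq g₁ g₂ ih₁ ih₂ =>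
    ext l; simp only [GChor.unfold, lang, langBnd, Set.mem_setOf_eq, ih₁, ih₂]
  | alt g₁ g₂ ih₁ ih₂ =>
    ext l; simp only [GChor.unfold, lang, langBnd, Set.mem_union, ih₁, ih₂]
  | star g ih =>
    ext l
    simp only [GChor.unfold, langBnd, Set.mem_setOf_eq]
    rw [mem_lang_iterUpTo]
    simp only [ih]

lemma mem_langR_starFree {M : Type} (g : GChor M) (hg : g.StarFree) (r : Run M) :
    r ∈ langR g ↔ ∃ l ∈ lang g, r = .fin l := by
  simp [langR, langInf_starFree g hg]

lemma satBnd_iff_sat_unfold {T A M : Type} (S : QSystem T A M) (n : ℕ) (Φ : QL A M) :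
    ∀ (π : Run T) (π' : List T),
      SatBnd S n π π' Φ ↔ Sat S π (.fin π') (Φ.unfold n) := by
  induction Φ with
  | top => intro π π'; simp [SatBnd, Sat, QL.unfold]
  | atom ψ => intro π π'; simp [SatBnd, Sat, QL.unfold]
  | neg Φ ih => intro π π'; simp [SatBnd, Sat, QL.unfold, ih]
  | or Φ₁ Φ₂ ih₁ ih₂ => intro π π'; simp [SatBnd, Sat, QL.unfold, ih₁, ih₂]
  | untl Φ₁ g Φ₂ ih₁ ih₂ =>
    intro π π'
    simp only [SatBnd, Sat, QL.unfold]
    constructor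
    · rintro ⟨π'', hlang, hprf, hΦ₂, hΦ₁⟩
      refine ⟨.fin π'', ?_, ?_, ?_, ?_⟩
      · rw [mem_langR_starFree _ (gchor_starFree_unfold n g)]
        exact ⟨π''.map S.lbl, by rw [lang_unfold]; exact hlang, rfl⟩
      · exact hprf
      · exact (ih₂ π (π' ++ π'')).mp hΦ₂
      · rintro (⟨l⟩ | ⟨f⟩) hpre hne
        · exact (ih₁ π (π' ++ l)).mp (hΦ₁ l hpre (fun h => hne (by rw [h])))
        · exact absurd hpre not_false
    · rintro ⟨π'', hlang, hprf, hΦ₂, hΦ₁⟩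
      rw [mem_langR_starFree _ (gchor_starFree_unfold n g)] at hlang
      obtain ⟨w, hw, heq⟩ := hlang
      obtain ⟨l⟩ | ⟨f⟩ := π''
      · simp only [Run.map, Run.fin.injEq] at heq
        subst heq
        rw [lang_unfold] at hw
        refine ⟨l, hw, hprf, (ih₂ π (π' ++ l)).mpr hΦ₂, ?_⟩
        intro π''' hpre hne
        exact (ih₁ π (π' ++ π''')).mpr
          (hΦ₁ (.fin π''') hpre (fun h => hne (Run.fin.inj h)))
      · exact absurd heq (by simp [Run.map])


/-- **Reduction of bounded counterexample search from QL to QL⁻**: the formula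
`Φ̂ = Φ.unfold n`, obtained by replacing each `*` by the disjunction of its at most
`n` unfoldings, is in `QL⁻`, and `Φ` has a counterexample run in `S` under the
`n`-bounded semantics (at most `n` unfoldings of each `*`) iff `Φ̂` has a
counterexample run in `S`. -/
theorem bounded_counterexample_reduction {T A M : Type} (S : QSystem T A M)
    (Φ : QL A M) (n : ℕ) :
    (Φ.unfold n).StarFree ∧
    ((∃ π : List T, π ∈ S.Runs ∧ S.final π ∧ SatBnd S n (.fin π) [] (.neg Φ)) ↔
      ∃ π : List T, π ∈ S.Runs ∧ S.final π ∧
        Sat S (.fin π) (.fin []) (.neg (Φ.unfold n))) := by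
  refine ⟨ql_starFree_unfold n Φ, ?_⟩
  constructor
  · rintro ⟨π, h1, h2, h3⟩
    exact ⟨π, h1, h2, (satBnd_iff_sat_unfold S n (.neg Φ) (.fin π) []).mp h3⟩
  · rintro ⟨π, h1, h2, h3⟩
    exact ⟨π, h1, h2, (satBnd_iff_sat_unfold S n (.neg Φ) (.fin π) []).mpr h3⟩
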